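/- arXiv:2605.09872 — 2 statements merged into one kernel-verified Lean document; each statement's English description precedes it below -/
import Mathlib

section
/- Soundness of the CSP-to-MIP protocol with one-way leakage: let Ψ be a CSP over variables U and alphabet Σ in which every constraint has arity exactly k ≥ 1, and suppose every assignment satisfies at most a 2^{-(ℓ+1)}-fraction of the constraints. Consider any deterministic cheating strategy consisting of: a function answering each constraint e = (u_1,...,u_k) with a tuple a(e) ∈ Σ^k, a leakage function L : E → {0,1}^ℓ, and for each leakage value m ∈ {0,1}^ℓ an assignment B_m : U → Σ. Then the acceptance probability of the verifier — which samples a uniform constraint e, a uniform coordinate i ∈ [k], and accepts iff a(e) satisfies the relation of e and a(e)_i = B_{L(e)}(u_i) — is at most 1 − 1/(2k). -/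
/-!
Call a constraint `e` *good* if the assignment `B (L e)` chosen for its leakage value satisfies
it. Since every one of the `2^ℓ` assignments `B m` satisfies at most a `2^{-(ℓ+1)}`-fraction of
the constraints, at most half of the constraints are good. On a constraint that is not good,
the answer `a e` either violates the relation, so that all `k` coordinates reject, or satisfies
it and therefore differs from `B (L e)` on some coordinate, which rejects. Either way at most
`k - 1` of the `k` coordinates accept, and the total count of accepting pairs is at most
`N (k - 1) + N / 2 = N k (1 - 1/(2k))`, where `N` is the number of constraints.
-/

/-- A k-ary CSP constraint: a scope in `U^k` and a relation `R ⊆ Σ^k`. -/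
structure KConstraint (U S : Type) (k : ℕ) where
  scope : Fin k → U
  rel : Set (Fin k → S)

open Finset

open scoped Classical

namespace KConstraint

variable {U S : Type} {k : ℕ}

def SatisfiedBy (c : KConstraint U S k) (A : U → S) : Prop :=
  (fun i => A (c.scope i)) ∈ c.rel

theorem exists_reject_of_not_satisfiedBy (hk : 1 ≤ k) (c : KConstraint U S k)
    {A : U → S} (hA : ¬c.SatisfiedBy A) (t : Fin k → S) :
    ∃ i, ¬(t ∈ c.rel ∧ t i = A (c.scope i)) := by
  by_contra! h
  have ht : t = fun i => A (c.scope i) := funext fun i => (h i).2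
  exact hA (ht ▸ (h ⟨0, hk⟩).1 : (fun i => A (c.scope i)) ∈ c.rel)

theorem sum_accept_le (hk : 1 ≤ k) (c : KConstraint U S k) (t : Fin k → S) (A : U → S) :
    ∑ i : Fin k, (if t ∈ c.rel ∧ t i = A (c.scope i) then (1 : ℝ) else 0)
      ≤ k - 1 + if c.SatisfiedBy A then 1 else 0 := by
  rw [sum_boole]
  split_ifs with hA
  · simpa using (card_filter_le univ _ : _ ≤ #(univ : Finset (Fin k)))
  · obtain ⟨i, hi⟩ := c.exists_reject_of_not_satisfiedBy hk hA t
    have hlt : #{i | t ∈ c.rel ∧ t i = A (c.scope i)} < #(univ : Finset (Fin k)) :=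
      card_lt_card (filter_ssubset.mpr ⟨i, mem_univ i, hi⟩)
    rw [card_univ, Fintype.card_fin] at hlt
    have : (#{i | t ∈ c.rel ∧ t i = A (c.scope i)} : ℝ) + 1 ≤ k := by exact_mod_cast hlt
    linarith

end KConstraint

theorem Finset.card_filter_comp_le_sum {ι M : Type*} [Fintype ι] [Fintype M]
    (P : M → ι → Prop) (L : ι → M) :
    #{e | P (L e) e} ≤ ∑ m, #{e | P m e} := by
  rw [card_eq_sum_card_fiberwise (f := L) (t := univ) fun _ _ => mem_coe.mpr (mem_univ _)]
  gcongr with m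
  intro e he
  simp only [mem_filter, mem_univ, true_and] at he ⊢
  exact he.2 ▸ he.1

theorem card_satisfiedBy_leak_le {U S ι : Type} [Fintype ι] {k ℓ : ℕ}
    (C : ι → KConstraint U S k)
    (hlow : ∀ A : U → S, (#{e | (C e).SatisfiedBy A} : ℝ) ≤ Fintype.card ι / 2 ^ (ℓ + 1))
    (L : ι → Fin ℓ → Bool) (B : (Fin ℓ → Bool) → U → S) :
    (#{e | (C e).SatisfiedBy (B (L e))} : ℝ) ≤ Fintype.card ι / 2 := by
  calc (#{e | (C e).SatisfiedBy (B (L e))} : ℝ)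
      ≤ ∑ m, (#{e | (C e).SatisfiedBy (B m)} : ℝ) := by
        exact_mod_cast card_filter_comp_le_sum (fun m e => (C e).SatisfiedBy (B m)) L
    _ ≤ ∑ _m : Fin ℓ → Bool, (Fintype.card ι : ℝ) / 2 ^ (ℓ + 1) := sum_le_sum fun m _ => hlow (B m)
    _ = Fintype.card ι / 2 := by
        simp only [sum_const, card_univ, Fintype.card_pi, Fintype.card_bool, prod_const,
          Fintype.card_fin, nsmul_eq_mul, Nat.cast_pow, Nat.cast_ofNat, pow_succ]
        field_simp

open scoped Classical in
theorem csp_to_mip_soundness_general {U S ι : Type} [Fintype ι]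
    (k ℓ : ℕ) (hk : 1 ≤ k) (C : ι → KConstraint U S k)
    (hlow : ∀ A : U → S,
      (Nat.card {e : ι // (fun i => A ((C e).scope i)) ∈ (C e).rel} : ℝ)
        ≤ (Fintype.card ι : ℝ) / 2 ^ (ℓ + 1))
    (a : ι → Fin k → S) (L : ι → Fin ℓ → Bool) (B : (Fin ℓ → Bool) → U → S) :
    (∑ e : ι, ∑ i : Fin k,
        (if a e ∈ (C e).rel ∧ a e i = B (L e) ((C e).scope i) then (1 : ℝ) else 0))
      / ((Fintype.card ι : ℝ) * k)
    ≤ 1 - 1 / (2 * k) := by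
  have hk' : (1 : ℝ) ≤ k := by exact_mod_cast hk
  have hgood := card_satisfiedBy_leak_le C (fun A => by
    rw [← Fintype.card_subtype, ← Nat.card_eq_fintype_card]
    exact hlow A) L B
  have hbound_nonneg : 0 ≤ 1 - 1 / (2 * (k : ℝ)) := by
    rw [sub_nonneg, div_le_one₀ (by positivity)]
    linarith
  refine div_le_of_le_mul₀ (by positivity) hbound_nonneg ?_
  calc _ ≤ ∑ e : ι, ((k : ℝ) - 1 + if (C e).SatisfiedBy (B (L e)) then 1 else 0) :=
        sum_le_sum fun e _ => (C e).sum_accept_le hk (a e) (B (L e))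
    _ = Fintype.card ι * ((k : ℝ) - 1) + #{e | (C e).SatisfiedBy (B (L e))} := by
        rw [sum_add_distrib, sum_const, card_univ, nsmul_eq_mul, sum_boole]
    _ ≤ (1 - 1 / (2 * k)) * (Fintype.card ι * k) := by
        field_simp
        linarith

open scoped Classical in
/-- Soundness of the CSP-to-MIP protocol with ℓ bits of one-way leakage: if every
assignment satisfies at most a `2^{-(ℓ+1)}`-fraction of the constraints, then any cheating
strategy (answer tuples `a`, leakage function `L`, and an assignment `B m` for each leakage
value `m`) is accepted with probability at most `1 - 1/(2k)`, where the verifier samples a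
uniform constraint and a uniform coordinate. -/
theorem csp_to_mip_soundness {U S ι : Type} [Fintype ι] [Nonempty ι]
    (k ℓ : ℕ) (hk : 1 ≤ k) (C : ι → KConstraint U S k)
    (hlow : ∀ A : U → S,
      (Nat.card {e : ι // (fun i => A ((C e).scope i)) ∈ (C e).rel} : ℝ)
        ≤ (Fintype.card ι : ℝ) / 2 ^ (ℓ + 1))
    (a : ι → Fin k → S) (L : ι → Fin ℓ → Bool) (B : (Fin ℓ → Bool) → U → S) :
    (∑ e : ι, ∑ i : Fin k,
        (if a e ∈ (C e).rel ∧ a e i = B (L e) ((C e).scope i) then (1 : ℝ) else 0))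
      / ((Fintype.card ι : ℝ) * k)
    ≤ 1 - 1 / (2 * k) :=
  csp_to_mip_soundness_general k ℓ hk C hlow a L B
end

section
/- Label cover consistency game soundness: let Ψ be a label cover instance with bipartite graph G = (L ∪ R, E), alphabets Σ_L, Σ_R, and projection constraints φ_e : Σ_L → Σ_R for each edge, and suppose val(Ψ) ≤ s. Consider the game in which the verifier samples a uniform edge e = (u, v), sends e to the first prover who returns a pair (α, β) ∈ Σ_L × Σ_R, then sends a uniformly random endpoint of e to the second prover who returns a label for that endpoint according to fixed assignments A_L : L → Σ_L and A_R : R → Σ_R; the verifier accepts iff β = φ_e(α) and the second prover's label matches the first prover's label on the queried endpoint. Then for any deterministic strategy, the acceptance probability is at most (1 + s)/2. -/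
open scoped Classical in
/-- Label cover consistency game soundness: if `val(Ψ) ≤ s`, then any deterministic
strategy — a first prover answering each edge `e` with a pair `P e ∈ Σ_L × Σ_R`, and a
second prover answering according to fixed assignments `AL, AR` on a uniformly chosen
endpoint — is accepted with probability at most `(1 + s)/2`. -/
theorem label_cover_consistency_soundness
    {Lv Rv SL SR ι : Type} [Fintype ι] [Nonempty ι]
    (u : ι → Lv) (v : ι → Rv) (φ : ι → SL → SR) (s : ℝ)
    (hval : ∀ (AL : Lv → SL) (AR : Rv → SR),
      (Nat.card {e : ι // φ e (AL (u e)) = AR (v e)} : ℝ) ≤ s * Fintype.card ι)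
    (P : ι → SL × SR) (AL : Lv → SL) (AR : Rv → SR) :
    (∑ e : ι,
        ((if (P e).2 = φ e (P e).1 ∧ (P e).1 = AL (u e) then (1 : ℝ) else 0)
          + (if (P e).2 = φ e (P e).1 ∧ (P e).2 = AR (v e) then (1 : ℝ) else 0)))
      / (2 * (Fintype.card ι : ℝ))
    ≤ (1 + s) / 2 := by
  have hN : (0 : ℝ) < (Fintype.card ι : ℝ) := by
    exact_mod_cast Fintype.card_pos
  rw [div_le_div_iff₀ (by linarith) (by norm_num)]
  have key : ∀ e : ι,
      ((if (P e).2 = φ e (P e).1 ∧ (P e).1 = AL (u e) then (1 : ℝ) else 0)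
        + (if (P e).2 = φ e (P e).1 ∧ (P e).2 = AR (v e) then (1 : ℝ) else 0))
      ≤ 1 + (if φ e (AL (u e)) = AR (v e) then (1 : ℝ) else 0) := by
    intro e
    by_cases h : φ e (AL (u e)) = AR (v e)
    · simp only [h, if_true]
      split_ifs <;> norm_num
    · simp only [h, if_false]
      split_ifs with h1 h2 h2
      · exact absurd (by rw [← h1.2, ← h2.2]; exact h1.1.symm) h
      all_goals norm_num
  calc (∑ e : ι,
        ((if (P e).2 = φ e (P e).1 ∧ (P e).1 = AL (u e) then (1 : ℝ) else 0)
          + (if (P e).2 = φ e (P e).1 ∧ (P e).2 = AR (v e) then (1 : ℝ) else 0))) * 2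
      ≤ (∑ e : ι, (1 + (if φ e (AL (u e)) = AR (v e) then (1 : ℝ) else 0))) * 2 := by
        have := Finset.sum_le_sum (fun e (_ : e ∈ Finset.univ) => key e)
        linarith
    _ = ((Fintype.card ι : ℝ) + (Nat.card {e : ι // φ e (AL (u e)) = AR (v e)} : ℝ)) * 2 := by
        rw [Finset.sum_add_distrib, Finset.sum_const, Finset.card_univ, Finset.sum_boole]
        simp [Nat.card_eq_fintype_card, Fintype.card_subtype]
    _ ≤ ((Fintype.card ι : ℝ) + s * (Fintype.card ι : ℝ)) * 2 := by
        have := hval AL AR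
        linarith
    _ = (1 + s) * (2 * (Fintype.card ι : ℝ)) := by ring
end
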